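/- Under the blanket assumptions, assume the level set X := {x: F(x) ≤ F(x⁰)} is nonempty and compact, and let ḡ := sup_{z∈X} g(z). Fix α̲ > 0 and define X_{α̲} := {z ∈ ℝ^n: dist²(z, X) ≤ ḡ/α̲} and 𝒴 := ∪_{z ∈ X_{α̲}} ∂g(z). Then 𝒴 is compact, and for every x ∈ X with (x,y) ∈ dom(Q) and every α ≥ α̲, the point y⁺ := prox_{αg*}(y + αx) belongs to 𝒴. -/

import Mathlib

open Filter Topology Set
open scoped RealInnerProductSpace Pointwise NNReal

noncomputable section

namespace Paper

variable {E : Type*} [NormedAddCommGroup E] [InnerProductSpace ℝ E]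

/-- The effective domain of an extended-real-valued function. -/
def edom (φ : E → EReal) : Set E := {x | φ x ≠ ⊤}

/-- A function with values in `(-∞, +∞]` is proper if it is not identically `+∞`
and never takes the value `-∞`. -/
def Proper (φ : E → EReal) : Prop := (∃ x, φ x ≠ ⊤) ∧ ∀ x, φ x ≠ ⊥

/-- The Fréchet subdifferential of `φ` at `x`. -/
def frSubdiff (φ : E → EReal) (x : E) : Set E :=
  {y | φ x ≠ ⊤ ∧ 0 ≤ Filter.liminf
      (fun z : E => (φ z - φ x - ((⟪y, z - x⟫ : ℝ) : EReal)) * ((‖z - x‖⁻¹ : ℝ) : EReal))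
      (𝓝[≠] x)}

/-- The limiting (Mordukhovich) subdifferential of `φ` at `x`. -/
def limSubdiff (φ : E → EReal) (x : E) : Set E :=
  {y | ∃ u v : ℕ → E,
      Tendsto u atTop (𝓝 x) ∧ Tendsto (fun k => φ (u k)) atTop (𝓝 (φ x)) ∧
      (∀ k, v k ∈ frSubdiff φ (u k)) ∧ Tendsto v atTop (𝓝 y)}

/-- The convex subdifferential of a real-valued function. -/
def cvxSubdiff (g : E → ℝ) (x : E) : Set E :=
  {y | ∀ z, g x + ⟪y, z - x⟫ ≤ g z}

/-- The convex subdifferential of an extended-real-valued function. -/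
def cvxSubdiffE (φ : E → EReal) (x : E) : Set E :=
  {y | ∀ z, φ x + ((⟪y, z - x⟫ : ℝ) : EReal) ≤ φ z}

/-- The Fenchel conjugate of an extended-real-valued function. -/
def fconjE (φ : E → EReal) : E → EReal :=
  fun y => ⨆ x : E, (((⟪x, y⟫ : ℝ) : EReal) - φ x)

/-- The Fenchel conjugate of a real-valued function. -/
def fconj (g : E → ℝ) : E → EReal := fconjE (fun x => ((g x : ℝ) : EReal))

/-- `φ` satisfies the calmness condition at `x` relative to `A`. -/
def CalmAt (φ : E → EReal) (x : E) (A : Set E) : Prop :=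
  ∃ κ : ℝ, 0 < κ ∧ ∃ B ∈ 𝓝 x, ∀ u ∈ B ∩ A,
    φ u ≤ φ x + ((κ * ‖u - x‖ : ℝ) : EReal) ∧ φ x ≤ φ u + ((κ * ‖u - x‖ : ℝ) : EReal)

/-- `φ` satisfies the calmness condition on `A`. -/
def CalmOn (φ : E → EReal) (A : Set E) : Prop := ∀ x ∈ A, CalmAt φ x A

/-- The Kurdyka–Łojasiewicz property of `φ` at `x`. -/
def KLAt (φ : E → EReal) (x : E) : Prop :=
  ∃ ε > (0 : ℝ), ∃ δ > (0 : ℝ), ∃ ϕ ϕ' : ℝ → ℝ,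
    ϕ 0 = 0 ∧ ContinuousOn ϕ (Set.Ico 0 ε) ∧ ConcaveOn ℝ (Set.Ico 0 ε) ϕ ∧
    (∀ s ∈ Set.Ioo (0 : ℝ) ε, HasDerivAt ϕ (ϕ' s) s) ∧
    ContinuousOn ϕ' (Set.Ioo 0 ε) ∧ (∀ s ∈ Set.Ioo (0 : ℝ) ε, 0 < ϕ' s) ∧
    ∀ z ∈ Metric.ball x δ, φ x < φ z → φ z < φ x + (ε : EReal) →
      1 ≤ ENNReal.ofReal (ϕ' ((φ z).toReal - (φ x).toReal)) *
        EMetric.infEdist (0 : E) (limSubdiff φ z)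

/-- The KL property of `φ` at `x` with exponent `θ`. -/
def KLExpAt (φ : E → EReal) (x : E) (θ : ℝ) : Prop :=
  ∃ c > (0 : ℝ), ∃ ε > (0 : ℝ), ∃ δ > (0 : ℝ),
    ∀ z ∈ Metric.ball x δ, φ x < φ z → φ z < φ x + (ε : EReal) →
      ENNReal.ofReal (c * ((φ z).toReal - (φ x).toReal) ^ θ) ≤
        EMetric.infEdist (0 : E) (limSubdiff φ z)

/-- The (possibly multivalued) proximity operator of `φ`. -/
def proxSet (φ : E → EReal) (u : E) : Set E :=
  {z | ∀ w, φ z + ((‖z - u‖ ^ 2 / 2 : ℝ) : EReal) ≤ φ w + ((‖w - u‖ ^ 2 / 2 : ℝ) : EReal)}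

/-- A positive scaling of an extended-real-valued function. -/
def scaleE (α : ℝ) (φ : E → EReal) : E → EReal := fun x => ((α : ℝ) : EReal) * φ x

/-- `h` is locally Lipschitz differentiable on `s`. -/
def LocLipGradOn [CompleteSpace E] (h : E → ℝ) (s : Set E) : Prop :=
  (∀ x ∈ s, DifferentiableAt ℝ h x) ∧
  ∀ x ∈ s, ∃ U ∈ 𝓝 x, ∃ L : ℝ, ∀ u ∈ U ∩ s, ∀ v ∈ U ∩ s,
    ‖gradient h u - gradient h v‖ ≤ L * ‖u - v‖

/-- The numerator `ζ = f + h`. -/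
def zeta (f : E → EReal) (h : E → ℝ) (x : E) : EReal := f x + ((h x : ℝ) : EReal)

/-- `η(x,y) = ⟨x,y⟩ − g^*(y)`. -/
def eta (g : E → ℝ) (x y : E) : EReal := ((⟪x, y⟫ : ℝ) : EReal) - fconj g y

/-- The extended objective of the fractional problem. -/
def Ffun (f : E → EReal) (g h : E → ℝ) (x : E) : EReal :=
  if g x ≠ 0 ∧ f x ≠ ⊤ then ((((f x).toReal + h x) / g x : ℝ) : EReal) else ⊤

/-- The extended objective of the reformulated problem. -/
def Qfun (f : E → EReal) (g h : E → ℝ) (x y : E) : EReal :=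
  if f x ≠ ⊤ ∧ 0 < eta g x y then
    ((((f x).toReal + h x) / (eta g x y).toReal : ℝ) : EReal) else ⊤

/-- Pack a pair into the `ℓ²` product space. -/
def mk2 (x y : E) : WithLp 2 (E × E) := (WithLp.equiv 2 (E × E)).symm (x, y)

def pr1 (p : WithLp 2 (E × E)) : E := (WithLp.equiv 2 (E × E) p).1

def pr2 (p : WithLp 2 (E × E)) : E := (WithLp.equiv 2 (E × E) p).2

/-- `Q` as a function on the `ℓ²` product space. -/
def Qpair (f : E → EReal) (g h : E → ℝ) (p : WithLp 2 (E × E)) : EReal :=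
  Qfun f g h (pr1 p) (pr2 p)

/-- The blanket assumptions of the paper. -/
structure Blanket [CompleteSpace E] (f : E → EReal) (g h : E → ℝ) : Prop where
  f_proper : Proper f
  f_lsc : LowerSemicontinuous f
  f_cont : ContinuousOn f (edom f)
  f_bddBelow : ∃ m : ℝ, ∀ x, (m : EReal) ≤ f x
  h_lsc : LowerSemicontinuous h
  h_diff : LocLipGradOn h {x | g x ≠ 0}
  g_convex : ConvexOn ℝ Set.univ g
  g_nonneg : ∀ x, 0 ≤ g x
  omega_nonempty : ∃ x, g x ≠ 0
  zeta_nonneg : ∀ x, f x ≠ ⊤ → 0 ≤ zeta f h x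

/-- `x` is a critical point of `F`: `0 ∈ ∂̂f(x) + ∇h(x) − F(x)·∂g(x)`. -/
def IsCritF [CompleteSpace E] (f : E → EReal) (g h : E → ℝ) (x : E) : Prop :=
  g x ≠ 0 ∧ f x ≠ ⊤ ∧
  ∃ u ∈ frSubdiff f x, ∃ v ∈ cvxSubdiff g x,
    u + gradient h x - (Ffun f g h x).toReal • v = 0

/-- The level set `X = {x : F(x) ≤ F(x⁰)}`. -/
def lvlSet (f : E → EReal) (g h : E → ℝ) (x0 : E) : Set E :=
  {x | Ffun f g h x ≤ Ffun f g h x0}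

/-- The enlargement `X_{α̲}` of the level set. -/
def Xal (f : E → EReal) (g h : E → ℝ) (x0 : E) (αl : ℝ) : Set E :=
  {z | (Metric.infDist z (lvlSet f g h x0)) ^ 2 ≤ sSup (g '' lvlSet f g h x0) / αl}

/-- The compact set `𝒴 = ∪_{z ∈ X_{α̲}} ∂g(z)`. -/
def Yset (f : E → EReal) (g h : E → ℝ) (x0 : E) (αl : ℝ) : Set E :=
  ⋃ z ∈ Xal f g h x0 αl, cvxSubdiff g z

/-- The set `S = {(x,y) ∈ X × 𝒴 : η(x,y) > 0}`. -/
def Sset (f : E → EReal) (g h : E → ℝ) (x0 : E) (αl : ℝ) : Set (E × E) :=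
  {p | p.1 ∈ lvlSet f g h x0 ∧ p.2 ∈ Yset f g h x0 αl ∧ 0 < eta g p.1 p.2}

/-- The set of accumulation points of a sequence. -/
def accSet {X : Type*} [TopologicalSpace X] (pt : ℕ → X) : Set X :=
  {p | ∃ σ : ℕ → ℕ, StrictMono σ ∧ Tendsto (pt ∘ σ) atTop (𝓝 p)}

/-- A polyhedral function: its epigraph is a finite intersection of closed half-spaces. -/
def IsPolyhedralFn (φ : E → EReal) : Prop :=
  ∃ (m : ℕ) (w : Fin m → E) (c b : Fin m → ℝ),
    ∀ (x : E) (a : ℝ), (φ x ≤ (a : EReal) ↔ ∀ i, ⟪w i, x⟫ + c i * a ≤ b i)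

/-! The idea: `X_{α̲}` is a closed neighbourhood of radius `√(ḡ/α̲)` of the compact set `X`, and
the subdifferential of a continuous function over a compact set is bounded (a subgradient of
length `r` forces an increase of `r` over a unit step) and closed, so `𝒴` is compact. For the
inclusion, the optimality condition of `y⁺ = prox_{αg*}(y + αx)` says that
`z := x + (y - y⁺)/α` satisfies `z ∈ ∂g*(y⁺)`, i.e. `y⁺ ∈ ∂g(z)`. Testing the same condition
against `y` and using `g*(y) < ⟨x, y⟩` (that is, `η(x,y) > 0`) together with the Fenchel–Young
inequality `g*(y⁺) ≥ ⟨x, y⁺⟩ - g(x)` gives `‖y - y⁺‖² ≤ α g(x)`, hence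
`dist(z, X)² ≤ ‖z - x‖² ≤ g(x)/α ≤ ḡ/α̲`. -/

theorem isCompact_setOf_infDist_sq_le {M : Type*} [PseudoMetricSpace M] [ProperSpace M]
    {X : Set M} (hX : IsCompact X) (hne : X.Nonempty) (c : ℝ) :
    IsCompact {z | Metric.infDist z X ^ 2 ≤ c} := by
  refine (hX.cthickening (r := √c)).of_isClosed_subset
    (isClosed_le ((Metric.continuous_infDist_pt X).pow 2) continuous_const) fun z hz => ?_
  obtain ⟨p, hpX, hp⟩ := hX.exists_infDist_eq_dist hne z
  refine Metric.mem_cthickening_of_dist_le z p _ X hpX ?_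
  rw [← hp, ← abs_of_nonneg Metric.infDist_nonneg]
  exact Real.abs_le_sqrt hz

theorem norm_le_of_mem_cvxSubdiff {g : E → ℝ} {z y : E} (hy : y ∈ cvxSubdiff g z) {M : ℝ}
    (hM : ∀ w, dist w z ≤ 1 → g w ≤ M) : ‖y‖ ≤ M - g z := by
  have hinner : ⟪y, ‖y‖⁻¹ • y⟫ = ‖y‖ := by
    rw [real_inner_smul_right, real_inner_self_eq_norm_sq, inv_mul_eq_div, sq, mul_self_div_self]
  have hstep : dist (z + ‖y‖⁻¹ • y) z ≤ 1 := by
    rw [dist_self_add_left, norm_smul, norm_inv, norm_norm]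
    exact inv_mul_le_one_of_le₀ le_rfl (norm_nonneg y)
  have := hy (z + ‖y‖⁻¹ • y)
  rw [add_sub_cancel_left, hinner] at this
  linarith [hM _ hstep]

theorem isCompact_biUnion_cvxSubdiff [ProperSpace E] {g : E → ℝ} (hg : Continuous g)
    {K : Set E} (hK : IsCompact K) : IsCompact (⋃ z ∈ K, cvxSubdiff g z) := by
  obtain ⟨M, hM⟩ := (hK.cthickening (r := 1)).bddAbove_image hg.continuousOn
  obtain ⟨m, hm⟩ := hK.bddBelow_image hg.continuousOn
  set G : Set (E × E) := {p | p.1 ∈ K ∧ ∀ v, g p.1 + ⟪p.2, v - p.1⟫ ≤ g v}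
  have hG_closed : IsClosed G := by
    simp only [G, ofPred_and, ofPred_forall]
    exact (hK.isClosed.preimage continuous_fst).inter <| isClosed_iInter fun v =>
      isClosed_le (by fun_prop) continuous_const
  have hG_bounded : G ⊆ K ×ˢ Metric.closedBall 0 (M - m) := by
    rintro ⟨z, y⟩ ⟨hz, hy⟩
    refine ⟨hz, mem_closedBall_zero_iff.2 ?_⟩
    have hball : ∀ w, dist w z ≤ 1 → g w ≤ M := fun w hw =>
      hM ⟨w, Metric.mem_cthickening_of_dist_le w z 1 K hz hw, rfl⟩
    linarith [norm_le_of_mem_cvxSubdiff hy hball, hm ⟨z, hz, rfl⟩]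
  have hG : IsCompact G := (hK.prod (isCompact_closedBall 0 _)).of_isClosed_subset hG_closed
    hG_bounded
  convert hG.image continuous_snd using 1
  ext y
  simp [G, cvxSubdiff]

section Conjugate

theorem coe_inner_sub_le_fconj (g : E → ℝ) (x w : E) :
    ((⟪x, w⟫ - g x : ℝ) : EReal) ≤ fconj g w :=
  le_iSup_of_le x (EReal.coe_sub _ _).le

theorem fconj_le_coe_iff {g : E → ℝ} {w : E} {r : ℝ} :
    fconj g w ≤ r ↔ ∀ x, ⟪x, w⟫ - g x ≤ r := by
  simp only [fconj, fconjE, iSup_le_iff, ← EReal.coe_sub, EReal.coe_le_coe_iff]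

theorem fconj_ne_bot (g : E → ℝ) (w : E) : fconj g w ≠ ⊥ :=
  ne_bot_of_le_ne_bot (EReal.coe_ne_bot _) (coe_inner_sub_le_fconj g 0 w)

theorem exists_fconj_eq_coe_of_le {g : E → ℝ} {w : E} {r : ℝ} (h : fconj g w ≤ r) :
    ∃ s : ℝ, fconj g w = s ∧ s ≤ r := by
  have htop : fconj g w ≠ ⊤ := ne_top_of_le_ne_top (EReal.coe_ne_top r) h
  refine ⟨(fconj g w).toReal, (EReal.coe_toReal htop (fconj_ne_bot g w)).symm, ?_⟩
  rwa [← EReal.coe_le_coe_iff, EReal.coe_toReal htop (fconj_ne_bot g w)]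

theorem mem_cvxSubdiff_of_fconj_le {g : E → ℝ} {y z : E} (h : fconj g y ≤ ((⟪z, y⟫ - g z : ℝ) : EReal)) :
    y ∈ cvxSubdiff g z := by
  intro v
  have := fconj_le_coe_iff.1 h v
  rw [inner_sub_right, real_inner_comm v y, real_inner_comm z y]
  linarith

theorem fconj_add_smul_sub_le {g : E → ℝ} {y w : E} {a b t : ℝ} (hy : fconj g y ≤ a)
    (hw : fconj g w ≤ b) (ht₀ : 0 ≤ t) (ht₁ : t ≤ 1) :
    fconj g (y + t • (w - y)) ≤ ((1 - t) * a + t * b : ℝ) := by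
  refine fconj_le_coe_iff.2 fun x => ?_
  have hya := fconj_le_coe_iff.1 hy x
  have hwb := fconj_le_coe_iff.1 hw x
  rw [inner_add_right, real_inner_smul_right, inner_sub_right]
  nlinarith

theorem exists_fconj_le_of_lt [CompleteSpace E] {g : E → ℝ} (hconv : ConvexOn ℝ univ g)
    (hlsc : LowerSemicontinuous g) {z : E} {a : ℝ} (ha : a < g z) :
    ∃ w, fconj g w ≤ (⟪z, w⟫ - a : ℝ) := by
  obtain ⟨l, c, hle, hlz⟩ := hconv.exists_affine_le_of_lt (𝕜 := ℝ) (mem_univ z) ha isClosed_univ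
    (hlsc.lowerSemicontinuousOn univ)
  refine ⟨(InnerProductSpace.toDual ℝ E).symm l, fconj_le_coe_iff.2 fun x => ?_⟩
  have hx := hle ⟨x, mem_univ x⟩
  simp only [Pi.add_apply, Function.comp_apply, RCLike.re_to_real, domRestrict_apply,
    Function.const_apply] at hx hlz
  rw [← real_inner_comm x, ← real_inner_comm z, InnerProductSpace.toDual_symm_apply,
    InnerProductSpace.toDual_symm_apply]
  linarith

end Conjugate

section Prox

variable {g : E → ℝ} {α : ℝ} {u yp : E}

theorem exists_fconj_eq_of_mem_proxSet (hα : 0 < α) (hyp : yp ∈ proxSet (scaleE α (fconj g)) u)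
    {w : E} {b : ℝ} (hw : fconj g w ≤ b) :
    ∃ a : ℝ, fconj g yp = a ∧ α * a + ‖yp - u‖ ^ 2 / 2 ≤ α * b + ‖w - u‖ ^ 2 / 2 := by
  obtain ⟨c, hc, hcb⟩ := exists_fconj_eq_coe_of_le hw
  have hprox := hyp w
  simp only [scaleE, hc, ← EReal.coe_mul, ← EReal.coe_add] at hprox
  have htop : fconj g yp ≠ ⊤ := by
    intro htop
    rw [htop, EReal.coe_mul_top_of_pos hα, EReal.top_add_coe, top_le_iff] at hprox
    exact EReal.coe_ne_top _ hprox
  set a := (fconj g yp).toReal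
  have ha : fconj g yp = a := (EReal.coe_toReal htop (fconj_ne_bot g yp)).symm
  rw [ha, ← EReal.coe_mul, ← EReal.coe_add, EReal.coe_le_coe_iff] at hprox
  exact ⟨a, ha, by nlinarith⟩

/-- The first-order optimality condition of the proximal step: `(u - yp)/α ∈ ∂g*(yp)`. -/
theorem mul_sub_le_inner_of_mem_proxSet (hα : 0 < α) (hyp : yp ∈ proxSet (scaleE α (fconj g)) u)
    {a : ℝ} (ha : fconj g yp = a) {w : E} {b : ℝ} (hw : fconj g w ≤ b) :
    α * (a - b) ≤ ⟪yp - u, w - yp⟫ := by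
  have hstep : ∀ t ∈ Ioc (0 : ℝ) 1,
      α * (a - b) ≤ ⟪yp - u, w - yp⟫ + t * (‖w - yp‖ ^ 2 / 2) := by
    rintro t ⟨ht₀, ht₁⟩
    obtain ⟨s, hs, hprox⟩ := exists_fconj_eq_of_mem_proxSet hα hyp
      (fconj_add_smul_sub_le ha.le hw ht₀.le ht₁)
    have hnorm : ‖yp + t • (w - yp) - u‖ ^ 2 =
        ‖yp - u‖ ^ 2 + 2 * t * ⟪yp - u, w - yp⟫ + t ^ 2 * ‖w - yp‖ ^ 2 := by
      rw [show yp + t • (w - yp) - u = (yp - u) + t • (w - yp) by abel, norm_add_sq_real,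
        real_inner_smul_right, norm_smul, Real.norm_of_nonneg ht₀.le]
      ring
    rw [ha, EReal.coe_eq_coe_iff] at hs
    subst hs
    nlinarith
  have hlim : Tendsto (fun t : ℝ => ⟪yp - u, w - yp⟫ + t * (‖w - yp‖ ^ 2 / 2)) (𝓝[>] 0)
      (𝓝 ⟪yp - u, w - yp⟫) := by
    have hcont : Continuous fun t : ℝ => ⟪yp - u, w - yp⟫ + t * (‖w - yp‖ ^ 2 / 2) := by
      fun_prop
    simpa using (hcont.tendsto 0).mono_left nhdsWithin_le_nhds
  exact ge_of_tendsto hlim (eventually_of_mem (Ioc_mem_nhdsGT one_pos) hstep)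

theorem norm_sub_sq_le_of_mem_proxSet {x y : E} (hα : 0 < α)
    (hyp : yp ∈ proxSet (scaleE α (fconj g)) (y + α • x)) (hy : fconj g y ≤ ⟪x, y⟫) :
    ‖y - yp‖ ^ 2 ≤ α * g x := by
  obtain ⟨a, ha, -⟩ := exists_fconj_eq_of_mem_proxSet hα hyp hy
  have hopt := mul_sub_le_inner_of_mem_proxSet hα hyp ha hy
  have hyoung : ⟪x, yp⟫ - g x ≤ a := by
    exact_mod_cast ha ▸ coe_inner_sub_le_fconj g x yp
  rw [show yp - (y + α • x) = -(y - yp) - α • x by abel, inner_sub_left, inner_neg_left,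
    real_inner_self_eq_norm_sq, real_inner_smul_left, inner_sub_right] at hopt
  nlinarith

/-- Moreau's decomposition, in the form `prox_{αg*}(u) ∈ ∂g((u - prox_{αg*}(u))/α)`. The exact
subgradient of `g` at that point is not available, so the optimality condition is tested against
the slopes of affine minorants of `g` that are almost exact there. -/
theorem mem_cvxSubdiff_of_mem_proxSet [CompleteSpace E] (hconv : ConvexOn ℝ univ g)
    (hlsc : LowerSemicontinuous g) (hα : 0 < α) (hyp : yp ∈ proxSet (scaleE α (fconj g)) u) :
    yp ∈ cvxSubdiff g (α⁻¹ • (u - yp)) := by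
  set z := α⁻¹ • (u - yp) with hz_def
  have hz : yp - u = -(α • z) := by simp [hz_def, smul_smul, hα.ne']
  clear_value z
  obtain ⟨w₀, hw₀⟩ := exists_fconj_le_of_lt hconv hlsc (sub_one_lt (g z))
  obtain ⟨a, ha, -⟩ := exists_fconj_eq_of_mem_proxSet hα hyp hw₀
  have hbound : ∀ c < g z, c ≤ ⟪z, yp⟫ - a := by
    intro c hc
    obtain ⟨w, hw⟩ := exists_fconj_le_of_lt hconv hlsc hc
    have hopt := mul_sub_le_inner_of_mem_proxSet hα hyp ha hw
    rw [hz, inner_neg_left, real_inner_smul_left, inner_sub_right] at hopt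
    nlinarith
  refine mem_cvxSubdiff_of_fconj_le ?_
  rw [ha, EReal.coe_le_coe_iff]
  linarith [le_of_forall_lt_imp_le_of_dense hbound]

end Prox

theorem fconj_le_inner_of_Qfun_ne_top {f : E → EReal} {g h : E → ℝ} {x y : E}
    (hQ : Qfun f g h x y ≠ ⊤) : fconj g y ≤ ⟪x, y⟫ := by
  by_contra hlt
  exact hQ (if_neg fun hdom => hlt (EReal.sub_pos.1 hdom.2).le)

theorem statement12_general {n : ℕ} (f : EuclideanSpace ℝ (Fin n) → EReal)
    (g h : EuclideanSpace ℝ (Fin n) → ℝ) (hb : Blanket f g h)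
    (x0 : EuclideanSpace ℝ (Fin n))
    (hne : (lvlSet f g h x0).Nonempty) (hcomp : IsCompact (lvlSet f g h x0))
    (αl : ℝ) (hαl : 0 < αl) :
    IsCompact (Yset f g h x0 αl) ∧
    ∀ x ∈ lvlSet f g h x0, ∀ y, Qfun f g h x y ≠ ⊤ → ∀ α : ℝ, αl ≤ α →
      ∀ yp ∈ proxSet (scaleE α (fconj g)) (y + α • x), yp ∈ Yset f g h x0 αl := by
  have hg : Continuous g := continuousOn_univ.mp (hb.g_convex.continuousOn isOpen_univ)
  refine ⟨isCompact_biUnion_cvxSubdiff hg (isCompact_setOf_infDist_sq_le hcomp hne _), ?_⟩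
  intro x hx y hQ α hα yp hyp
  have hα₀ : 0 < α := hαl.trans_le hα
  have hstep := norm_sub_sq_le_of_mem_proxSet hα₀ hyp (fconj_le_inner_of_Qfun_ne_top hQ)
  refine mem_iUnion₂.2 ⟨_, ?_, mem_cvxSubdiff_of_mem_proxSet hb.g_convex hg.lowerSemicontinuous
    hα₀ hyp⟩
  have hdist : dist (α⁻¹ • (y + α • x - yp)) x = ‖y - yp‖ / α := by
    rw [dist_eq_norm, show y + α • x - yp = (y - yp) + α • x by abel, smul_add, smul_smul,
      inv_mul_cancel₀ hα₀.ne', one_smul, add_sub_cancel_right, norm_smul,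
      Real.norm_of_nonneg (inv_nonneg.2 hα₀.le), inv_mul_eq_div]
  calc Metric.infDist _ (lvlSet f g h x0) ^ 2 ≤ (‖y - yp‖ / α) ^ 2 :=
        hdist ▸ pow_le_pow_left₀ Metric.infDist_nonneg (Metric.infDist_le_dist_of_mem hx) 2
    _ ≤ α * g x / α ^ 2 := by rw [div_pow]; gcongr
    _ = g x / α := by field_simp
    _ ≤ sSup (g '' lvlSet f g h x0) / αl :=
        div_le_div₀ ((hb.g_nonneg x).trans (le_csSup (hcomp.image hg).bddAbove ⟨x, hx, rfl⟩))
          (le_csSup (hcomp.image hg).bddAbove ⟨x, hx, rfl⟩) hαl hα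

/-- `𝒴` is compact and contains every proximal step on `g^*` started in `S`. -/
theorem statement12 {n : ℕ} (f : EuclideanSpace ℝ (Fin n) → EReal)
    (g h : EuclideanSpace ℝ (Fin n) → ℝ) (hb : Blanket f g h)
    (x0 : EuclideanSpace ℝ (Fin n)) (hx0 : Ffun f g h x0 ≠ ⊤)
    (hne : (lvlSet f g h x0).Nonempty) (hcomp : IsCompact (lvlSet f g h x0))
    (αl : ℝ) (hαl : 0 < αl) :
    IsCompact (Yset f g h x0 αl) ∧
    ∀ x ∈ lvlSet f g h x0, ∀ y, Qfun f g h x y ≠ ⊤ → ∀ α : ℝ, αl ≤ α →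
      ∀ yp ∈ proxSet (scaleE α (fconj g)) (y + α • x), yp ∈ Yset f g h x0 αl :=
  statement12_general f g h hb x0 hne hcomp αl hαl

end Paper
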